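/- arXiv:2106.13439 — 3 statements merged into one kernel-verified Lean document; each statement's English description precedes it below -/
import Mathlib

section
/- Let w, h be real numbers and let f(θ) = (w − sin θ)·(h − cos θ). For every θ in the open interval (−π/2, π/2), if the derivative of f at θ is 0, then x = tan θ satisfies the quartic equation (w² − 1)·x⁴ − 2·w·h·x³ + (w² + h² + 2)·x² − 2·w·h·x + (h² − 1) = 0. -/
/-!
Differentiating, `θ` is critical exactly when `w sin θ - h cos θ = sin² θ - cos² θ`. Dividing by
`cos θ` gives `w x - h = (x² - 1) cos θ` for `x = tan θ`; squaring and using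
`cos² θ = 1 / (1 + x²)` yields `(w x - h)² (1 + x²) = (x² - 1)²`, whose expansion is the quartic.
-/

open Real

theorem hasDerivAt_sub_sin_mul_sub_cos (w h θ : ℝ) :
    HasDerivAt (fun θ : ℝ => (w - sin θ) * (h - cos θ))
      (w * sin θ - h * cos θ - (sin θ ^ 2 - cos θ ^ 2)) θ := by
  have hsin : HasDerivAt (fun θ : ℝ => w - sin θ) (-cos θ) θ := (hasDerivAt_sin θ).const_sub w
  have hcos : HasDerivAt (fun θ : ℝ => h - cos θ) (sin θ) θ := by
    simpa using (hasDerivAt_cos θ).const_sub h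
  exact (hsin.mul hcos).congr_deriv (by ring)

theorem sq_mul_one_add_tan_sq_eq {w h θ : ℝ} (hcos : cos θ ≠ 0)
    (hcrit : w * sin θ - h * cos θ = sin θ ^ 2 - cos θ ^ 2) :
    (w * tan θ - h) ^ 2 * (1 + tan θ ^ 2) = (tan θ ^ 2 - 1) ^ 2 := by
  have hlin : w * tan θ - h = (tan θ ^ 2 - 1) * cos θ := by
    apply mul_right_cancel₀ hcos
    rw [← tan_mul_cos hcos] at hcrit
    linear_combination hcrit
  rw [hlin]
  linear_combination (tan θ ^ 2 - 1) ^ 2 * one_add_tan_sq_mul_cos_sq_eq_one hcos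

theorem stmt_4 (w h : ℝ) (θ : ℝ) (hθ : θ ∈ Set.Ioo (-(Real.pi / 2)) (Real.pi / 2))
    (hcrit : deriv (fun θ : ℝ => (w - Real.sin θ) * (h - Real.cos θ)) θ = 0) :
    (w ^ 2 - 1) * Real.tan θ ^ 4 - 2 * w * h * Real.tan θ ^ 3
      + (w ^ 2 + h ^ 2 + 2) * Real.tan θ ^ 2 - 2 * w * h * Real.tan θ
      + (h ^ 2 - 1) = 0 := by
  rw [(hasDerivAt_sub_sin_mul_sub_cos w h θ).deriv, sub_eq_zero] at hcrit
  have hquartic := sq_mul_one_add_tan_sq_eq (cos_pos_of_mem_Ioo hθ).ne' hcrit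
  linear_combination hquartic
end

section
/- Let w, h be real numbers with w > 1, and let f(θ) = (w − sin θ)·(h − cos θ). The set {θ ∈ [0, π/2) : f′(θ) = 0} of critical points of f in the half-open interval [0, π/2) is finite and has at most 4 elements. -/
open Real

open Polynomial in
theorem stmt_5 (w h : ℝ) (hw : 1 < w) :
    {θ : ℝ | θ ∈ Set.Ico (0 : ℝ) (Real.pi / 2) ∧
      deriv (fun θ : ℝ => (w - Real.sin θ) * (h - Real.cos θ)) θ = 0}.Finite ∧
    {θ : ℝ | θ ∈ Set.Ico (0 : ℝ) (Real.pi / 2) ∧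
      deriv (fun θ : ℝ => (w - Real.sin θ) * (h - Real.cos θ)) θ = 0}.ncard ≤ 4 := by
  set S := {θ : ℝ | θ ∈ Set.Ico (0 : ℝ) (Real.pi / 2) ∧
      deriv (fun θ : ℝ => (w - Real.sin θ) * (h - Real.cos θ)) θ = 0} with hS
  set P : ℝ[X] := C 4 * X^4 + C (-4*w) * X^3 + C (w^2-4+h^2) * X^2 + C (2*w) * X
      + C (1-h^2) with hP
  have hderiv : ∀ θ : ℝ, deriv (fun θ : ℝ => (w - Real.sin θ) * (h - Real.cos θ)) θ
      = (-Real.cos θ) * (h - Real.cos θ) + (w - Real.sin θ) * Real.sin θ := by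
    intro θ
    have h1 : HasDerivAt (fun θ : ℝ => (w - Real.sin θ) * (h - Real.cos θ))
        ((-Real.cos θ) * (h - Real.cos θ) + (w - Real.sin θ) * (-(-Real.sin θ))) θ :=
      ((Real.hasDerivAt_sin θ).const_sub w).mul ((Real.hasDerivAt_cos θ).const_sub h)
    simpa using h1.deriv
  have hPne : P ≠ 0 := by
    intro h0
    have : P.coeff 4 = 4 := by
      simp only [hP, coeff_add, coeff_C_mul, coeff_X_pow, coeff_C, coeff_X]
      norm_num
    rw [h0] at this
    norm_num at this
  have hdeg : P.natDegree ≤ 4 := by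
    rw [hP]
    compute_degree
  have hroot : ∀ θ ∈ S, P.eval (Real.sin θ) = 0 := by
    intro θ hθ
    obtain ⟨⟨hθ0, hθ1⟩, hd⟩ := hθ
    rw [hderiv θ] at hd
    have hpyth : Real.sin θ ^ 2 + Real.cos θ ^ 2 = 1 := Real.sin_sq_add_cos_sq θ
    have key : h * Real.cos θ = 1 - 2 * Real.sin θ ^ 2 + w * Real.sin θ := by nlinarith
    have : (h * Real.cos θ)^2 = (1 - 2 * Real.sin θ ^ 2 + w * Real.sin θ)^2 := by
      rw [key]
    simp only [hP, eval_add, eval_mul, eval_pow, eval_C, eval_X]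
    nlinarith [this, hpyth]
  have hsub : Set.Ico (0:ℝ) (Real.pi/2) ⊆ Set.Icc (-(Real.pi/2)) (Real.pi/2) := by
    intro x hx
    constructor
    · linarith [hx.1, Real.pi_pos]
    · linarith [hx.2]
  have hinj : Set.InjOn Real.sin S := by
    intro a ha b hb hab
    exact Real.injOn_sin (hsub ha.1) (hsub hb.1) hab
  have himg : Real.sin '' S ⊆ (P.roots.toFinset : Set ℝ) := by
    rintro x ⟨θ, hθ, rfl⟩
    simp only [Finset.coe_sort_coe, Multiset.mem_toFinset, Finset.mem_coe]
    rw [Polynomial.mem_roots hPne]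
    exact hroot θ hθ
  have hfin : S.Finite := by
    have : (Real.sin '' S).Finite := Set.Finite.subset (P.roots.toFinset : Set ℝ).toFinite himg
    exact Set.Finite.of_finite_image this hinj
  refine ⟨hfin, ?_⟩
  have h1 : S.ncard = (Real.sin '' S).ncard := (Set.ncard_image_of_injOn hinj).symm
  have h2 : (Real.sin '' S).ncard ≤ (P.roots.toFinset : Set ℝ).ncard :=
    Set.ncard_le_ncard himg (P.roots.toFinset : Set ℝ).toFinite
  have h3 : (P.roots.toFinset : Set ℝ).ncard = P.roots.toFinset.card := by
    simp [Set.ncard_coe_finset]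
  have h4 : P.roots.toFinset.card ≤ Multiset.card P.roots := Multiset.toFinset_card_le _
  have h5 : Multiset.card P.roots ≤ P.natDegree := Polynomial.card_roots' P
  omega
end

section
/- Let w, h be real numbers with w > 1 and h > 1, and let f(θ) = (w − sin θ)·(h − cos θ). The set of points θ in the open interval (0, π/2) at which f attains a local maximum has at most 3 elements. -/
/-!
At a critical point θ of `f` one has `w sin θ - h cos θ = sin² θ - cos² θ`; squaring and dividing
by `cos⁴ θ` shows that `tan θ` is a root of a nonzero real polynomial of degree at most four, so
`f` has at most four critical points in `(0, π/2)`. Between two local maxima of a differentiable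
function there is a critical point (otherwise, by Darboux, `f` would be strictly monotone between
them), so if `f` had two or more local maxima they could not exhaust the critical points.
-/

open Real Set Polynomial

section LocalMax

variable {f : ℝ → ℝ} {a b : ℝ}

theorem IsLocalMax.not_strictMonoOn_Icc (ha : IsLocalMax f a) (hab : a < b) :
    ¬StrictMonoOn f (Icc a b) := by
  intro hmono
  obtain ⟨x, hfx, hx⟩ := ((ha.filter_mono nhdsWithin_le_nhds).and
    (Ioo_mem_nhdsGT hab)).exists
  exact (hmono (left_mem_Icc.mpr hab.le) (Ioo_subset_Icc_self hx) hx.1).not_ge hfx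

theorem IsLocalMax.not_strictAntiOn_Icc (hb : IsLocalMax f b) (hab : a < b) :
    ¬StrictAntiOn f (Icc a b) := by
  intro hanti
  obtain ⟨x, hfx, hx⟩ := ((hb.filter_mono nhdsWithin_le_nhds).and
    (Ioo_mem_nhdsLT hab)).exists
  exact (hanti (Ioo_subset_Icc_self hx) (right_mem_Icc.mpr hab.le) hx.2).not_ge hfx

theorem exists_deriv_eq_zero_of_isLocalMax (hf : Differentiable ℝ f) (hab : a < b)
    (ha : IsLocalMax f a) (hb : IsLocalMax f b) : ∃ c ∈ Ioo a b, deriv f c = 0 := by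
  by_contra! hne
  have hcont : ContinuousOn f (Icc a b) := hf.continuous.continuousOn
  rcases hasDerivWithinAt_forall_lt_or_forall_gt_of_forall_ne (convex_Ioo a b)
    (fun x _ => (hf x).hasDerivAt.hasDerivWithinAt) hne with hneg | hpos
  · refine hb.not_strictAntiOn_Icc hab (strictAntiOn_of_deriv_neg (convex_Icc a b) hcont ?_)
    simpa only [interior_Icc] using hneg
  · refine ha.not_strictMonoOn_Icc hab (strictMonoOn_of_deriv_pos (convex_Icc a b) hcont ?_)
    simpa only [interior_Icc] using hpos

theorem setOf_isLocalMax_ssubset_setOf_deriv_eq_zero (hf : Differentiable ℝ f) {I : Set ℝ}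
    [I.OrdConnected] (hZ : {x ∈ I | deriv f x = 0}.Finite)
    (hS : {x ∈ I | IsLocalMax f x}.Nontrivial) :
    {x ∈ I | IsLocalMax f x} ⊂ {x ∈ I | deriv f x = 0} := by
  set S := {x ∈ I | IsLocalMax f x}
  have hSZ : S ⊆ {x ∈ I | deriv f x = 0} := fun x hx => ⟨hx.1, hx.2.deriv_eq_zero⟩
  refine hSZ.ssubset_of_ne fun hSeq => ?_
  obtain ⟨a, haS, b₀, hb₀S, hab₀⟩ := hS.exists_lt
  -- `b` is the local maximum right after `a`; a critical point between them would be another one.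
  obtain ⟨b, ⟨hbS, hab⟩, hbmin⟩ := exists_min_image {x ∈ S | a < x} id
    ((hZ.subset hSZ).subset fun x hx => hx.1) ⟨b₀, hb₀S, hab₀⟩
  obtain ⟨c, hc, hc0⟩ := exists_deriv_eq_zero_of_isLocalMax hf hab haS.2 hbS.2
  have hcS : c ∈ S := hSeq ▸ ⟨Set.Icc_subset I haS.1 hbS.1 (Ioo_subset_Icc_self hc), hc0⟩
  exact (hbmin c ⟨hcS, hc.1⟩).not_gt hc.2

end LocalMax

noncomputable def rectArea (w h θ : ℝ) : ℝ := (w - sin θ) * (h - cos θ)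

theorem hasDerivAt_rectArea (w h θ : ℝ) :
    HasDerivAt (rectArea w h) (w * sin θ - h * cos θ - (sin θ ^ 2 - cos θ ^ 2)) θ :=
  (((hasDerivAt_sin θ).const_sub w).mul ((hasDerivAt_cos θ).const_sub h)).congr_deriv
    (by ring)

theorem differentiable_rectArea (w h : ℝ) : Differentiable ℝ (rectArea w h) :=
  fun θ => (hasDerivAt_rectArea w h θ).differentiableAt

noncomputable def criticalQuartic (w h : ℝ) : ℝ[X] :=
  C (w ^ 2 - 1) * X ^ 4 - C (2 * w * h) * X ^ 3 + C (w ^ 2 + h ^ 2 + 2) * X ^ 2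
    - C (2 * w * h) * X + C (h ^ 2 - 1)

theorem eval_criticalQuartic (w h t : ℝ) :
    (criticalQuartic w h).eval t = (w * t - h) ^ 2 * (1 + t ^ 2) - (t ^ 2 - 1) ^ 2 := by
  simp only [criticalQuartic, eval_add, eval_sub, eval_mul, eval_pow, eval_C, eval_X]
  ring

theorem criticalQuartic_ne_zero (w h : ℝ) : criticalQuartic w h ≠ 0 := by
  have hcoeff : (criticalQuartic w h).coeff 2 = w ^ 2 + h ^ 2 + 2 := by
    simp only [criticalQuartic, coeff_add, coeff_sub, coeff_C_mul_X_pow, coeff_C_mul_X, coeff_C]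
    norm_num
  intro h0
  rw [h0, coeff_zero] at hcoeff
  nlinarith [sq_nonneg w, sq_nonneg h]

theorem natDegree_criticalQuartic_le (w h : ℝ) : (criticalQuartic w h).natDegree ≤ 4 := by
  unfold criticalQuartic
  compute_degree

theorem isRoot_criticalQuartic_tan {w h θ : ℝ} (hcos : cos θ ≠ 0)
    (hcrit : deriv (rectArea w h) θ = 0) : (criticalQuartic w h).IsRoot (tan θ) := by
  rw [(hasDerivAt_rectArea w h θ).deriv, sub_eq_zero] at hcrit
  rw [IsRoot, eval_criticalQuartic, tan_eq_sin_div_cos]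
  field_simp
  linear_combination (w * sin θ - h * cos θ + (sin θ ^ 2 - cos θ ^ 2)) * hcrit
    + (w * sin θ - h * cos θ) ^ 2 * sin_sq_add_cos_sq θ

theorem finite_and_ncard_le_four_criticalPoints (w h : ℝ) :
    {θ ∈ Ioo (-(π / 2)) (π / 2) | deriv (rectArea w h) θ = 0}.Finite ∧
      {θ ∈ Ioo (-(π / 2)) (π / 2) | deriv (rectArea w h) θ = 0}.ncard ≤ 4 := by
  set Z := {θ ∈ Ioo (-(π / 2)) (π / 2) | deriv (rectArea w h) θ = 0}
  set R : Set ℝ := ((criticalQuartic w h).roots.toFinset : Set ℝ)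
  have hmaps : MapsTo tan Z R := fun θ hθ => by
    simpa [R, criticalQuartic_ne_zero] using
      isRoot_criticalQuartic_tan (cos_pos_of_mem_Ioo hθ.1).ne' hθ.2
  have hinj : InjOn tan Z := injOn_tan.mono fun θ hθ => hθ.1
  refine ⟨.of_injOn hmaps hinj R.toFinite, ?_⟩
  calc Z.ncard ≤ R.ncard := ncard_le_ncard_of_injOn tan hmaps hinj
    _ ≤ Multiset.card (criticalQuartic w h).roots := by
      rw [ncard_coe_finset]; exact Multiset.toFinset_card_le _
    _ ≤ 4 := (card_roots' _).trans (natDegree_criticalQuartic_le w h)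

theorem stmt_6_general (w h : ℝ) :
    {θ : ℝ | θ ∈ Set.Ioo (0 : ℝ) (Real.pi / 2) ∧
      IsLocalMax (fun θ : ℝ => (w - Real.sin θ) * (h - Real.cos θ)) θ}.Finite ∧
    {θ : ℝ | θ ∈ Set.Ioo (0 : ℝ) (Real.pi / 2) ∧
      IsLocalMax (fun θ : ℝ => (w - Real.sin θ) * (h - Real.cos θ)) θ}.ncard ≤ 3 := by
  change {θ ∈ Ioo 0 (π / 2) | IsLocalMax (rectArea w h) θ}.Finite ∧
    {θ ∈ Ioo 0 (π / 2) | IsLocalMax (rectArea w h) θ}.ncard ≤ 3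
  set S := {θ ∈ Ioo 0 (π / 2) | IsLocalMax (rectArea w h) θ}
  set Z := {θ ∈ Ioo 0 (π / 2) | deriv (rectArea w h) θ = 0}
  obtain ⟨hfin, hcard⟩ := finite_and_ncard_le_four_criticalPoints w h
  have hZsub : Z ⊆ {θ ∈ Ioo (-(π / 2)) (π / 2) | deriv (rectArea w h) θ = 0} :=
    fun θ hθ => ⟨⟨by linarith [hθ.1.1, pi_pos], hθ.1.2⟩, hθ.2⟩
  have hZfin : Z.Finite := hfin.subset hZsub
  have hSfin : S.Finite := hZfin.subset fun θ hθ => ⟨hθ.1, hθ.2.deriv_eq_zero⟩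
  refine ⟨hSfin, ?_⟩
  rcases S.subsingleton_or_nontrivial with hsub | hnt
  · have := hSfin.to_subtype
    linarith [ncard_le_one_iff_subsingleton.mpr hsub]
  · have hlt : S.ncard < Z.ncard := ncard_lt_ncard
      (setOf_isLocalMax_ssubset_setOf_deriv_eq_zero (differentiable_rectArea w h) hZfin hnt) hZfin
    linarith [ncard_le_ncard hZsub hfin]

theorem stmt_6 (w h : ℝ) (hw : 1 < w) (hh : 1 < h) :
    {θ : ℝ | θ ∈ Set.Ioo (0 : ℝ) (Real.pi / 2) ∧
      IsLocalMax (fun θ : ℝ => (w - Real.sin θ) * (h - Real.cos θ)) θ}.Finite ∧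
    {θ : ℝ | θ ∈ Set.Ioo (0 : ℝ) (Real.pi / 2) ∧
      IsLocalMax (fun θ : ℝ => (w - Real.sin θ) * (h - Real.cos θ)) θ}.ncard ≤ 3 :=
  stmt_6_general w h
end
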